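/- arXiv:2305.15110 — 4 statements merged into one kernel-verified Lean document; each statement's English description precedes it below -/
import Mathlib

section
/- Let G be a connected graph with n vertices and m edges. Then G has a bond of size m - n + 2 if and only if V(G) can be partitioned into two nonempty sets A and B such that the induced subgraphs G[A] and G[B] are both trees. -/
open SimpleGraph

/-- An edge-cut of `G`: a set of edges of `G` whose deletion disconnects `G`. -/
def IsEdgeCut {V : Type*} (G : SimpleGraph V) (S : Set (Sym2 V)) : Prop :=
  S ⊆ G.edgeSet ∧ ¬ (G.deleteEdges S).Connected

/-- A bond: a minimal nonempty edge-cut. -/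
def IsBond {V : Type*} (G : SimpleGraph V) (S : Set (Sym2 V)) : Prop :=
  S.Nonempty ∧ IsEdgeCut G S ∧ ∀ T ⊂ S, T.Nonempty → ¬ IsEdgeCut G T

/-- A largest bond: a bond of maximum size. -/
def IsLargestBond {V : Type*} (G : SimpleGraph V) (S : Set (Sym2 V)) : Prop :=
  IsBond G S ∧ ∀ T, IsBond G T → T.ncard ≤ S.ncard

/-- The set of edges of `G` between `X` and its complement. -/
def crossEdges {V : Type*} (G : SimpleGraph V) (X : Set V) : Set (Sym2 V) :=
  {e ∈ G.edgeSet | ∃ x ∈ X, ∃ y ∈ Xᶜ, e = s(x, y)}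

/-- `G` is 2-connected: at least 3 vertices and connected after deleting any ≤ 1 vertices. -/
def TwoConnected {V : Type*} (G : SimpleGraph V) : Prop :=
  3 ≤ Nat.card V ∧ ∀ s : Set V, s.ncard ≤ 1 → (G.induce sᶜ).Connected

/-- `G` is 3-connected: at least 4 vertices and connected after deleting any ≤ 2 vertices. -/
def ThreeConnected {V : Type*} (G : SimpleGraph V) : Prop :=
  4 ≤ Nat.card V ∧ ∀ s : Set V, s.ncard ≤ 2 → (G.induce sᶜ).Connected

/-- A longest cycle of `G`. -/
def IsLongestCycle {V : Type*} (G : SimpleGraph V) {v : V} (C : G.Walk v v) : Prop :=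
  C.IsCycle ∧ ∀ (u : V) (D : G.Walk u u), D.IsCycle → D.length ≤ C.length

namespace AuxDH

variable {V : Type*} {G : SimpleGraph V} {X A : Set V}

lemma crossEdges_subset : crossEdges G X ⊆ G.edgeSet := fun _ h => h.1

lemma mem_crossEdges_of {u v : V} (h : G.Adj u v) (hu : u ∈ X) (hv : v ∈ Xᶜ) :
    s(u, v) ∈ crossEdges G X :=
  ⟨h, u, hu, v, hv, rfl⟩

lemma mem_crossEdges_elim {u v : V} (h : s(u, v) ∈ crossEdges G X) :
    G.Adj u v ∧ ((u ∈ X ∧ v ∈ Xᶜ) ∨ (v ∈ X ∧ u ∈ Xᶜ)) := by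
  obtain ⟨he, x, hx, y, hy, hxy⟩ := h
  rw [Sym2.eq_iff] at hxy
  refine ⟨he, ?_⟩
  rcases hxy with ⟨rfl, rfl⟩ | ⟨rfl, rfl⟩
  · exact Or.inl ⟨hx, hy⟩
  · exact Or.inr ⟨hx, hy⟩

lemma not_mem_crossEdges_of_left {u v : V} (hu : u ∈ X) (hv : v ∈ X) :
    s(u, v) ∉ crossEdges G X := by
  intro h
  rcases (mem_crossEdges_elim h).2 with ⟨_, h2⟩ | ⟨_, h2⟩
  · exact h2 hv
  · exact h2 hu

lemma not_mem_crossEdges_of_right {u v : V} (hu : u ∈ Xᶜ) (hv : v ∈ Xᶜ) :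
    s(u, v) ∉ crossEdges G X := by
  intro h
  rcases (mem_crossEdges_elim h).2 with ⟨h1, _⟩ | ⟨h1, _⟩
  · exact hu h1
  · exact hv h1

/-- The edges of `G` with both ends in `X`. -/
def inside (G : SimpleGraph V) (X : Set V) : Set (Sym2 V) :=
  {e ∈ G.edgeSet | ∀ v ∈ e, v ∈ X}

lemma mem_inside {u v : V} : s(u, v) ∈ inside G X ↔ G.Adj u v ∧ u ∈ X ∧ v ∈ X := by
  constructor
  · rintro ⟨h, hall⟩
    exact ⟨h, hall u (by simp), hall v (by simp)⟩
  · rintro ⟨h, hu, hv⟩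
    refine ⟨h, fun w hw => ?_⟩
    rcases Sym2.mem_iff.1 hw with rfl | rfl <;> assumption

lemma inside_eq_image : inside G X = Sym2.map (Subtype.val : X → V) '' (G.induce X).edgeSet := by
  ext e
  induction e using Sym2.inductionOn with
  | hf u v =>
    rw [mem_inside]
    constructor
    · rintro ⟨h, hu, hv⟩
      exact ⟨s(⟨u, hu⟩, ⟨v, hv⟩), by simpa using h, rfl⟩
    · rintro ⟨e', he', heq⟩
      induction e' using Sym2.inductionOn with
      | hf a b =>
        rw [Sym2.map_pair_eq, Sym2.eq_iff] at heq
        have hadj : G.Adj a.1 b.1 := he'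
        rcases heq with ⟨h1, h2⟩ | ⟨h1, h2⟩
        · rw [← h1, ← h2]; exact ⟨hadj, a.2, b.2⟩
        · rw [← h1, ← h2]; exact ⟨hadj.symm, b.2, a.2⟩

lemma ncard_inside : (inside G X).ncard = (G.induce X).edgeSet.ncard := by
  rw [inside_eq_image, Set.ncard_image_of_injective _ (Sym2.map.injective Subtype.val_injective)]

lemma edgeSet_partition :
    G.edgeSet = inside G X ∪ inside G Xᶜ ∪ crossEdges G X := by
  ext e
  induction e using Sym2.inductionOn with
  | hf u v =>
    simp only [Set.mem_union, mem_inside, compl_compl]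
    constructor
    · intro h
      by_cases hu : u ∈ X <;> by_cases hv : v ∈ X
      · exact Or.inl (Or.inl ⟨h, hu, hv⟩)
      · exact Or.inr (mem_crossEdges_of h hu hv)
      · exact Or.inr (Sym2.eq_swap ▸ mem_crossEdges_of h.symm hv hu)
      · exact Or.inl (Or.inr ⟨h, hu, hv⟩)
    · rintro ((⟨h, _⟩ | ⟨h, _⟩) | h)
      · exact h
      · exact h
      · exact h.1

lemma ncard_edgeSet_eq [Fintype V] :
    G.edgeSet.ncard
      = (G.induce X).edgeSet.ncard + (G.induce Xᶜ).edgeSet.ncard + (crossEdges G X).ncard := by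
  classical
  have hdisj1 : Disjoint (inside G X) (inside G Xᶜ) := by
    rw [Set.disjoint_left]
    intro e he1 he2
    induction e using Sym2.inductionOn with
    | hf u v =>
      rw [mem_inside] at he1 he2
      exact he2.2.1 he1.2.1
  have hdisj2 : Disjoint (inside G X ∪ inside G Xᶜ) (crossEdges G X) := by
    rw [Set.disjoint_left]
    intro e he1 he2
    induction e using Sym2.inductionOn with
    | hf u v =>
      rcases he1 with h | h <;> rw [mem_inside] at h
      · exact not_mem_crossEdges_of_left h.2.1 h.2.2 he2
      · exact not_mem_crossEdges_of_right h.2.1 h.2.2 he2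
  rw [edgeSet_partition (X := X), Set.ncard_union_eq hdisj2 (Set.toFinite _) (Set.toFinite _),
    Set.ncard_union_eq hdisj1 (Set.toFinite _) (Set.toFinite _), ncard_inside, ncard_inside]

lemma reachable_deleteEdge_of (H : SimpleGraph V) {x y : V}
    (hxy : (H.deleteEdges {s(x, y)}).Reachable x y) {a b : V} (h : H.Reachable a b) :
    (H.deleteEdges {s(x, y)}).Reachable a b := by
  obtain ⟨p⟩ := h
  induction p with
  | nil => exact Reachable.refl _
  | @cons a c b hadj q ih =>
    refine Reachable.trans ?_ ih
    by_cases he : s(a, c) = s(x, y)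
    · rw [Sym2.eq_iff] at he
      rcases he with ⟨rfl, rfl⟩ | ⟨rfl, rfl⟩
      · exact hxy
      · exact hxy.symm
    · exact (SimpleGraph.deleteEdges_adj.mpr ⟨hadj, by simpa using he⟩).reachable

lemma exists_cycle_edge_delete {W : Type*} (H : SimpleGraph W) (hconn : H.Connected)
    (hac : ¬ H.IsAcyclic) :
    ∃ e ∈ H.edgeSet, (H.deleteEdges {e}).Connected := by
  simp only [IsAcyclic, not_forall, not_not] at hac
  obtain ⟨v, c, hc⟩ := hac
  have hlen := hc.three_le_length
  have hne : c.edges ≠ [] := by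
    intro h
    have h2 := c.length_edges
    rw [h] at h2
    simp at h2
    omega
  obtain ⟨e, he⟩ := List.exists_mem_of_ne_nil _ hne
  have heE : e ∈ H.edgeSet := c.edges_subset_edgeSet he
  refine ⟨e, heE, ?_⟩
  induction e using Sym2.inductionOn with
  | hf x y =>
    have hreach : (H.deleteEdges {s(x, y)}).Reachable x y :=
      (adj_and_reachable_delete_edges_iff_exists_cycle.mpr ⟨v, c, hc, he⟩).2
    rw [connected_iff]
    exact ⟨fun a b => reachable_deleteEdge_of H hreach (hconn.preconnected a b),
      hconn.nonempty⟩

lemma card_le_ncard_edgeSet_add_one :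
    ∀ (n : ℕ) {W : Type*} [Fintype W] (H : SimpleGraph W), H.edgeSet.ncard = n →
      H.Connected → Fintype.card W ≤ n + 1 := by
  intro n
  induction n using Nat.strong_induction_on with
  | _ n ih =>
    intro W _ H hn hconn
    classical
    by_cases hac : H.IsAcyclic
    · have ht : H.IsTree := ⟨hconn, hac⟩
      letI : Fintype H.edgeSet := Fintype.ofFinite _
      have h2 := ht.card_edgeFinset
      have h3 : H.edgeFinset.card = H.edgeSet.ncard := by
        rw [Set.ncard_eq_toFinset_card']; exact congrArg Finset.card (Finset.ext fun _ => by simp)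
      omega
    · obtain ⟨e, heE, hconn'⟩ := exists_cycle_edge_delete H hconn hac
      have hpos : 1 ≤ n := by
        rw [← hn]
        exact (Set.ncard_pos (Set.toFinite _)).mpr ⟨e, heE⟩
      have hcard : (H.deleteEdges {e}).edgeSet.ncard = n - 1 := by
        rw [edgeSet_deleteEdges, Set.ncard_diff_singleton_of_mem heE, hn]
      have := ih (n - 1) (by omega) _ hcard hconn'
      omega

lemma isTree_of_connected_of_card {W : Type*} [Fintype W] (H : SimpleGraph W)
    (hconn : H.Connected) (hcard : H.edgeSet.ncard + 1 = Fintype.card W) : H.IsTree := by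
  refine ⟨hconn, ?_⟩
  by_contra hac
  obtain ⟨e, heE, hconn'⟩ := exists_cycle_edge_delete H hconn hac
  have hpos : 1 ≤ H.edgeSet.ncard := (Set.ncard_pos (Set.toFinite _)).mpr ⟨e, heE⟩
  have hcard' : (H.deleteEdges {e}).edgeSet.ncard = H.edgeSet.ncard - 1 := by
    rw [edgeSet_deleteEdges, Set.ncard_diff_singleton_of_mem heE]
  have := card_le_ncard_edgeSet_add_one _ (H.deleteEdges {e}) hcard' hconn'
  omega

lemma isTree_card {W : Type*} [Fintype W] {H : SimpleGraph W} (ht : H.IsTree) :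
    H.edgeSet.ncard + 1 = Fintype.card W := by
  classical
  letI : Fintype H.edgeSet := Fintype.ofFinite _
  have h2 := ht.card_edgeFinset
  have h3 : H.edgeFinset.card = H.edgeSet.ncard := by
    rw [Set.ncard_eq_toFinset_card']; exact congrArg Finset.card (Finset.ext fun _ => by simp)
  omega

lemma reach_in_induce {H G : SimpleGraph V} (hle : H ≤ G) {A : Set V}
    (hcl : ∀ ⦃x y : V⦄, x ∈ A → H.Adj x y → y ∈ A) {a b : V} (p : H.Walk a b) :
    ∀ ha : a ∈ A, ∃ hb : b ∈ A, (G.induce A).Reachable ⟨a, ha⟩ ⟨b, hb⟩ := by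
  induction p with
  | nil => exact fun ha => ⟨ha, Reachable.refl _⟩
  | @cons a c b hadj q ih =>
    intro ha
    have hc : c ∈ A := hcl ha hadj
    obtain ⟨hb, hr⟩ := ih hc
    have hadj' : (G.induce A).Adj ⟨a, ha⟩ ⟨c, hc⟩ := by
      simp only [comap_adj, Function.Embedding.coe_subtype]
      exact hle hadj
    exact ⟨hb, hadj'.reachable.trans hr⟩

lemma crossEdges_nonempty (hconn : G.Connected) {a b : V} (ha : a ∈ A) (hb : b ∉ A) :
    (crossEdges G A).Nonempty := by
  obtain ⟨p⟩ := hconn.preconnected a b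
  obtain ⟨d, _, hd1, hd2⟩ := p.exists_boundary_dart A ha hb
  exact ⟨s(d.fst, d.snd), mem_crossEdges_of d.adj hd1 hd2⟩

lemma crossEdges_isEdgeCut (hA : A.Nonempty) (hAc : Aᶜ.Nonempty) :
    IsEdgeCut G (crossEdges G A) := by
  refine ⟨crossEdges_subset, fun hcon => ?_⟩
  obtain ⟨a, ha⟩ := hA
  obtain ⟨b, hb⟩ := hAc
  obtain ⟨p⟩ := hcon.preconnected a b
  obtain ⟨d, _, hd1, hd2⟩ := p.exists_boundary_dart A ha hb
  have hadj := d.adj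
  rw [deleteEdges_adj] at hadj
  exact hadj.2 (mem_crossEdges_of hadj.1 hd1 hd2)

lemma deleteEdges_connected_of_ssubset (hA : (G.induce A).Connected)
    (hAc : (G.induce Aᶜ).Connected) {T : Set (Sym2 V)} (hT : T ⊂ crossEdges G A) :
    (G.deleteEdges T).Connected := by
  obtain ⟨e, heS, heT⟩ := Set.exists_of_ssubset hT
  have hsub := hT.subset
  obtain ⟨heE, x, hx, y, hy, heq⟩ := heS
  subst heq
  have hxy : (G.deleteEdges T).Adj x y := deleteEdges_adj.mpr ⟨heE, heT⟩
  let homA : G.induce A →g G.deleteEdges T :=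
    ⟨Subtype.val, fun {p q} hpq =>
      deleteEdges_adj.mpr ⟨hpq, fun hmem => not_mem_crossEdges_of_left p.2 q.2 (hsub hmem)⟩⟩
  let homAc : G.induce Aᶜ →g G.deleteEdges T :=
    ⟨Subtype.val, fun {p q} hpq =>
      deleteEdges_adj.mpr ⟨hpq, fun hmem => not_mem_crossEdges_of_right p.2 q.2 (hsub hmem)⟩⟩
  have key : ∀ u : V, (G.deleteEdges T).Reachable u x := by
    intro u
    by_cases hu : u ∈ A
    · exact Reachable.map homA (hA.preconnected ⟨u, hu⟩ ⟨x, hx⟩)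
    · have : (G.deleteEdges T).Reachable u y :=
        Reachable.map homAc (hAc.preconnected ⟨u, hu⟩ ⟨y, hy⟩)
      exact this.trans hxy.symm.reachable
  rw [connected_iff]
  exact ⟨fun u w => (key u).trans (key w).symm, ⟨x⟩⟩

lemma crossEdges_subset_of_closed {S : Set (Sym2 V)} {B : Set V}
    (hcl : ∀ ⦃x y : V⦄, x ∈ B → (G.deleteEdges S).Adj x y → y ∈ B) :
    crossEdges G B ⊆ S := by
  intro e he
  induction e using Sym2.inductionOn with
  | hf x y =>
    obtain ⟨hadj, hcase⟩ := mem_crossEdges_elim he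
    by_contra hnS
    rcases hcase with ⟨hx, hy⟩ | ⟨hy, hx⟩
    · exact hy (hcl hx (deleteEdges_adj.mpr ⟨hadj, hnS⟩))
    · exact hx (hcl hy (deleteEdges_adj.mpr ⟨hadj.symm, by rw [Sym2.eq_swap]; exact hnS⟩))

lemma ncard_coe {W : Type*} (A : Set W) [Fintype ↥A] : Fintype.card ↥A = A.ncard := by
  rw [← Nat.card_eq_fintype_card, Nat.card_coe_set_eq]

end AuxDH

open AuxDH in
/-- a connected graph has a bond of size `m - n + 2` iff its vertex set can be
partitioned into two nonempty parts both of which induce trees. -/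
theorem dual_hamiltonian_iff_tree_partition {V : Type*} [Fintype V] (G : SimpleGraph V)
    (hconn : G.Connected) :
    (∃ S : Set (Sym2 V), IsBond G S ∧ S.ncard + Nat.card V = G.edgeSet.ncard + 2) ↔
      ∃ A : Set V, A.Nonempty ∧ Aᶜ.Nonempty ∧
        (G.induce A).IsTree ∧ (G.induce Aᶜ).IsTree := by
  classical
  constructor
  · rintro ⟨S, ⟨hSne, hScut, hSmin⟩, hScard⟩
    set H := G.deleteEdges S with hH
    have hle : H ≤ G := deleteEdges_le S
    have hnp : ¬ H.Preconnected := fun hp =>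
      hScut.2 ((connected_iff _).mpr ⟨hp, hconn.nonempty⟩)
    simp only [Preconnected, not_forall] at hnp
    obtain ⟨v, w, hvw⟩ := hnp
    set A : Set V := {u | H.Reachable v u} with hAdef
    have hva : v ∈ A := Reachable.refl v
    have hwA : w ∉ A := hvw
    have hclA : ∀ ⦃x y : V⦄, x ∈ A → H.Adj x y → y ∈ A :=
      fun x y hx hadj => hx.trans hadj.reachable
    have hclAc : ∀ ⦃x y : V⦄, x ∈ Aᶜ → H.Adj x y → y ∈ Aᶜ :=
      fun x y hx hadj hy => hx (Reachable.trans hy hadj.symm.reachable)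
    have hSA : crossEdges G A ⊆ S := crossEdges_subset_of_closed hclA
    have hAne : A.Nonempty := ⟨v, hva⟩
    have hAcne : Aᶜ.Nonempty := ⟨w, hwA⟩
    have hcrossne : (crossEdges G A).Nonempty := crossEdges_nonempty hconn hva hwA
    have hSeq : crossEdges G A = S := by
      by_contra hne
      exact hSmin _ (ssubset_of_subset_of_ne hSA hne) hcrossne (crossEdges_isEdgeCut hAne hAcne)
    -- induce A is connected
    have hconnA : (G.induce A).Connected := by
      rw [connected_iff]
      refine ⟨?_, ⟨⟨v, hva⟩⟩⟩
      rintro ⟨a, ha⟩ ⟨b, hb⟩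
      obtain ⟨p⟩ := ((ha : H.Reachable v a).symm.trans (hb : H.Reachable v b))
      obtain ⟨hb', hr⟩ := reach_in_induce hle hclA p ha
      exact hr
    -- Aᶜ equals the component of w
    set B : Set V := {u | H.Reachable w u} with hBdef
    have hwB : w ∈ B := Reachable.refl w
    have hvB : v ∉ B := fun h => hvw (Reachable.symm h)
    have hclB : ∀ ⦃x y : V⦄, x ∈ B → H.Adj x y → y ∈ B :=
      fun x y hx hadj => hx.trans hadj.reachable
    have hBAc : B ⊆ Aᶜ := fun u hu ha => hvw ((ha : H.Reachable v u).trans (Reachable.symm hu))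
    have hSB : crossEdges G B ⊆ S := crossEdges_subset_of_closed hclB
    have hSeqB : crossEdges G B = S := by
      by_contra hne
      exact hSmin _ (ssubset_of_subset_of_ne hSB hne)
        (crossEdges_nonempty hconn hwB hvB) (crossEdges_isEdgeCut ⟨w, hwB⟩ ⟨v, hvB⟩)
    have hAcB : Aᶜ ⊆ B := by
      intro z hz
      by_contra hzB
      set C : Set V := {u | H.Reachable z u} with hCdef
      have hzC : z ∈ C := Reachable.refl z
      have hvC : v ∉ C := fun h => hz (Reachable.symm h)
      have hclC : ∀ ⦃x y : V⦄, x ∈ C → H.Adj x y → y ∈ C :=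
        fun x y hx hadj => hx.trans hadj.reachable
      have hCAc : C ⊆ Aᶜ := fun u hu ha => hz ((ha : H.Reachable v u).trans (Reachable.symm hu))
      have hSC : crossEdges G C ⊆ S := crossEdges_subset_of_closed hclC
      have hSeqC : crossEdges G C = S := by
        by_contra hne
        exact hSmin _ (ssubset_of_subset_of_ne hSC hne)
          (crossEdges_nonempty hconn hzC hvC) (crossEdges_isEdgeCut ⟨z, hzC⟩ ⟨v, hvC⟩)
      obtain ⟨e, heS⟩ := hSne
      have heA : e ∈ crossEdges G A := hSeq ▸ heS
      obtain ⟨heE, x, hx, y, hy, heq⟩ := heA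
      subst heq
      have hyB : y ∈ B := by
        have heB : s(x, y) ∈ crossEdges G B := hSeqB ▸ heS
        rcases (mem_crossEdges_elim heB).2 with ⟨hxB, _⟩ | ⟨hyB, _⟩
        · exact absurd hx (hBAc hxB)
        · exact hyB
      have hyC : y ∈ C := by
        have heC : s(x, y) ∈ crossEdges G C := hSeqC ▸ heS
        rcases (mem_crossEdges_elim heC).2 with ⟨hxC, _⟩ | ⟨hyC, _⟩
        · exact absurd hx (hCAc hxC)
        · exact hyC
      exact hzB ((hyC : H.Reachable z y).trans (Reachable.symm hyB)).symm
    have hAcBeq : Aᶜ = B := Set.Subset.antisymm hAcB hBAc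
    have hconnAc : (G.induce Aᶜ).Connected := by
      rw [connected_iff]
      refine ⟨?_, ⟨⟨w, hwA⟩⟩⟩
      rintro ⟨a, ha⟩ ⟨b, hb⟩
      have haB : a ∈ B := hAcB ha
      have hbB : b ∈ B := hAcB hb
      obtain ⟨p⟩ := ((haB : H.Reachable w a).symm.trans (hbB : H.Reachable w b))
      obtain ⟨hb', hr⟩ := reach_in_induce hle hclAc p ha
      exact hr
    -- counting
    refine ⟨A, hAne, hAcne, ?_, ?_⟩
    all_goals {
      letI : Fintype ↥A := Fintype.ofFinite _
      letI : Fintype ↥(Aᶜ) := Fintype.ofFinite _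
      have hm := ncard_edgeSet_eq (G := G) (X := A)
      rw [hSeq] at hm
      have hb1 := card_le_ncard_edgeSet_add_one _ _ rfl hconnA
      have hb2 := card_le_ncard_edgeSet_add_one _ _ rfl hconnAc
      rw [ncard_coe] at hb1 hb2
      have hcompl : A.ncard + Aᶜ.ncard = Nat.card V :=
        Set.ncard_add_ncard_compl A (Set.toFinite _) (Set.toFinite _)
      first
      | exact isTree_of_connected_of_card _ hconnA (by rw [ncard_coe]; omega)
      | exact isTree_of_connected_of_card _ hconnAc (by rw [ncard_coe]; omega)
    }
  · rintro ⟨A, hAne, hAcne, htA, htAc⟩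
    refine ⟨crossEdges G A, ⟨?_, crossEdges_isEdgeCut hAne hAcne, ?_⟩, ?_⟩
    · obtain ⟨b, hb⟩ := hAcne
      exact crossEdges_nonempty hconn hAne.choose_spec hb
    · intro T hT _ hcut
      exact hcut.2 (deleteEdges_connected_of_ssubset htA.isConnected htAc.isConnected hT)
    · letI : Fintype ↥A := Fintype.ofFinite _
      letI : Fintype ↥(Aᶜ) := Fintype.ofFinite _
      have hm := ncard_edgeSet_eq (G := G) (X := A)
      have h1 := isTree_card htA
      have h2 := isTree_card htAc
      rw [ncard_coe] at h1 h2
      have hcompl : A.ncard + Aᶜ.ncard = Nat.card V :=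
        Set.ncard_add_ncard_compl A (Set.toFinite _) (Set.toFinite _)
      omega
end

section
/- Let G be a 3-connected graph and let B = [X, Y] be a largest bond of G, where (X, Y) is the corresponding partition of V(G) with G[X] and G[Y] connected. Then |X| ≥ 2 and |Y| ≥ 2. -/
open SimpleGraph

section Aux

variable {V : Type*} (G : SimpleGraph V)

lemma crossEdges_subset_edgeSet (X : Set V) : crossEdges G X ⊆ G.edgeSet :=
  fun _ he => he.1

lemma crossEdges_compl (X : Set V) : crossEdges G Xᶜ = crossEdges G X := by
  ext e
  simp only [crossEdges, Set.mem_setOf_eq, compl_compl]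
  constructor
  · rintro ⟨he, x, hx, y, hy, rfl⟩
    exact ⟨he, y, hy, x, hx, Sym2.eq_swap⟩
  · rintro ⟨he, x, hx, y, hy, rfl⟩
    exact ⟨he, y, hy, x, hx, Sym2.eq_swap⟩

lemma not_mem_crossEdges {X : Set V} {a b : V} (ha : a ∈ X) (hb : b ∈ X) :
    s(a, b) ∉ crossEdges G X := by
  rintro ⟨-, x, hx, y, hy, h⟩
  rw [Sym2.eq_iff] at h
  rcases h with ⟨rfl, rfl⟩ | ⟨rfl, rfl⟩
  · exact hy hb
  · exact hy ha

/-- the inclusion homomorphism from an induced subgraph -/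
def induceHom' (s : Set V) : G.induce s →g G where
  toFun := Subtype.val
  map_rel' := by intro a b h; exact h

lemma connected_of_threeConnected (h3 : ThreeConnected G) : G.Connected := by
  have hc := h3.2 ∅ (by simp)
  rw [Set.compl_empty] at hc
  rw [connected_iff]
  constructor
  · intro a b
    have := hc.preconnected ⟨a, Set.mem_univ a⟩ ⟨b, Set.mem_univ b⟩
    exact this.map (induceHom' G Set.univ)
  · exact ⟨Classical.choice hc.nonempty |>.1⟩

lemma crossEdges_nonempty (hG : G.Connected) {X : Set V} (hX : X.Nonempty)
    (hXc : Xᶜ.Nonempty) : (crossEdges G X).Nonempty := by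
  obtain ⟨a, ha⟩ := hX
  obtain ⟨b, hb⟩ := hXc
  obtain ⟨p⟩ := hG.preconnected a b
  obtain ⟨d, _, hd1, hd2⟩ := p.exists_boundary_dart X ha hb
  exact ⟨s(d.fst, d.snd), G.mem_edgeSet.mpr d.adj, d.fst, hd1, d.snd, hd2, rfl⟩

/-- inclusion hom into the edge-deleted graph -/
def deleteHom {X : Set V} {T : Set (Sym2 V)} (hT : T ⊆ crossEdges G X) :
    G.induce X →g G.deleteEdges T where
  toFun := Subtype.val
  map_rel' := by
    intro u v huv
    have hadj : G.Adj u.val v.val := huv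
    rw [deleteEdges_adj]
    exact ⟨hadj, fun h => not_mem_crossEdges G u.2 v.2 (hT h)⟩

lemma reachable_deleteEdges {X : Set V} {T : Set (Sym2 V)} (hT : T ⊆ crossEdges G X)
    (hX : (G.induce X).Connected) {a b : V} (ha : a ∈ X) (hb : b ∈ X) :
    (G.deleteEdges T).Reachable a b :=
  (hX.preconnected ⟨a, ha⟩ ⟨b, hb⟩).map (deleteHom G hT)

lemma isBond_crossEdges (hG : G.Connected) {X : Set V}
    (hXne : X.Nonempty) (hXcne : Xᶜ.Nonempty)
    (hX : (G.induce X).Connected) (hY : (G.induce Xᶜ).Connected) :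
    IsBond G (crossEdges G X) := by
  refine ⟨crossEdges_nonempty G hG hXne hXcne, ⟨crossEdges_subset_edgeSet G X, ?_⟩, ?_⟩
  · intro hcon
    obtain ⟨a, ha⟩ := hXne
    obtain ⟨b, hb⟩ := hXcne
    obtain ⟨p⟩ := hcon.preconnected a b
    obtain ⟨d, _, hd1, hd2⟩ := p.exists_boundary_dart X ha hb
    have hd := d.adj
    rw [deleteEdges_adj] at hd
    exact hd.2 ⟨G.mem_edgeSet.mpr hd.1, d.fst, hd1, d.snd, hd2, rfl⟩
  · rintro T hTS hTne ⟨hTsub, hTcon⟩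
    apply hTcon
    obtain ⟨e, heS, heT⟩ := Set.exists_of_ssubset hTS
    obtain ⟨he, x, hx, y, hy, rfl⟩ := heS
    have hadj : (G.deleteEdges T).Adj x y := by
      rw [deleteEdges_adj]
      exact ⟨G.mem_edgeSet.mp he, heT⟩
    have hT' : T ⊆ crossEdges G Xᶜ := by rw [crossEdges_compl]; exact hTS.subset
    have key : ∀ c : V, (G.deleteEdges T).Reachable c x := by
      intro c
      by_cases hc : c ∈ X
      · exact reachable_deleteEdges G hTS.subset hX hc hx
      · exact (reachable_deleteEdges G hT' hY hc hy).trans hadj.symm.reachable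
    rw [connected_iff]
    exact ⟨fun a b => (key a).trans (key b).symm, ⟨x⟩⟩

lemma induce_pair_connected {v u : V} (h : G.Adj v u) :
    (G.induce {v, u}).Connected := by
  rw [connected_iff]
  refine ⟨?_, ⟨⟨v, by simp⟩⟩⟩
  rintro ⟨a, ha⟩ ⟨b, hb⟩
  have hvu : (G.induce {v, u}).Adj ⟨v, by simp⟩ ⟨u, by simp⟩ := h
  simp only [Set.mem_insert_iff, Set.mem_singleton_iff] at ha hb
  rcases ha with rfl | rfl <;> rcases hb with rfl | rfl
  · exact Reachable.refl _
  · exact hvu.reachable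
  · exact hvu.symm.reachable
  · exact Reachable.refl _

lemma three_le_degree [Fintype V] [DecidableEq V] [DecidableRel G.Adj]
    (h3 : ThreeConnected G) (u : V) : 3 ≤ G.degree u := by
  by_contra h
  push_neg at h
  have hncard : (G.neighborSet u).ncard = G.degree u := by
    rw [Set.ncard_eq_toFinset_card']
    rfl
  have hs : (G.neighborSet u).ncard ≤ 2 := by omega
  have hc := h3.2 _ hs
  have hcompl : (G.neighborSet u)ᶜ.ncard ≥ 2 := by
    have hsum := Set.ncard_add_ncard_compl (G.neighborSet u) (Set.toFinite _) (Set.toFinite _)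
    have h4 := h3.1
    omega
  have hu : u ∈ (G.neighborSet u)ᶜ := fun hmem => G.irrefl hmem
  obtain ⟨w, hw, hwu⟩ := Set.exists_ne_of_one_lt_ncard (s := (G.neighborSet u)ᶜ) (by omega) u
  obtain ⟨p⟩ := hc.preconnected ⟨u, hu⟩ ⟨w, hw⟩
  clear hc
  have key : ∀ (a b : ((G.neighborSet u)ᶜ : Set V))
      (_ : (G.induce (G.neighborSet u)ᶜ).Walk a b),
      a.val = u → b.val = w → False := by
    intro a b p
    induction p with
    | nil => intro h1 h2; rw [h1] at h2; exact hwu h2.symm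
    | @cons x y z hadj q ih =>
      intro h1 _
      have hxy : G.Adj x.val y.val := hadj
      rw [h1] at hxy
      exact y.2 hxy
  exact key _ _ p rfl rfl

lemma crossEdges_singleton (v : V) : crossEdges G {v} = G.incidenceSet v := by
  ext e
  constructor
  · rintro ⟨he, x, hx, y, hy, rfl⟩
    rcases hx with rfl
    exact ⟨he, Sym2.mem_mk_left _ _⟩
  · rintro ⟨he, hv⟩
    obtain ⟨y, rfl⟩ := Sym2.mem_iff_exists.mp hv
    have hadj : G.Adj v y := G.mem_edgeSet.mp he
    exact ⟨he, v, rfl, y, fun h => hadj.ne' h, rfl⟩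

lemma subset_crossEdges_pair {v u : V} :
    (G.incidenceSet v \ {s(v, u)}) ∪ (G.incidenceSet u \ {s(v, u)})
      ⊆ crossEdges G ({v, u} : Set V) := by
  rintro e (⟨⟨he, hv⟩, hne⟩ | ⟨⟨he, hv⟩, hne⟩)
  · obtain ⟨y, rfl⟩ := Sym2.mem_iff_exists.mp hv
    have hadj := G.mem_edgeSet.mp he
    refine ⟨he, v, Or.inl rfl, y, ?_, rfl⟩
    simp only [Set.mem_compl_iff, Set.mem_insert_iff, Set.mem_singleton_iff]
    push_neg
    refine ⟨fun h => hadj.ne' h, ?_⟩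
    rintro rfl
    exact hne rfl
  · obtain ⟨y, rfl⟩ := Sym2.mem_iff_exists.mp hv
    have hadj := G.mem_edgeSet.mp he
    refine ⟨he, u, Or.inr rfl, y, ?_, rfl⟩
    simp only [Set.mem_compl_iff, Set.mem_insert_iff, Set.mem_singleton_iff]
    push_neg
    refine ⟨?_, fun h => hadj.ne' h⟩
    rintro rfl
    exact hne Sym2.eq_swap

lemma ncard_incidenceSet [Fintype V] [DecidableEq V] [DecidableRel G.Adj] (v : V) :
    (G.incidenceSet v).ncard = G.degree v := by
  rw [Set.ncard_eq_toFinset_card', Set.toFinset_card]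
  convert G.card_incidenceSet_eq_degree v

/-- Main one-sided lemma. -/
lemma side_ge_two {V : Type*} [Fintype V] (G : SimpleGraph V)
    (h3 : ThreeConnected G) (X : Set V)
    (hX : (G.induce X).Connected) (hY : (G.induce Xᶜ).Connected)
    (hB : IsLargestBond G (crossEdges G X)) : 2 ≤ X.ncard := by
  classical
  have hG : G.Connected := connected_of_threeConnected G h3
  obtain ⟨e, he, v, hv, u, hu, rfl⟩ := hB.1.1
  by_contra hlt
  push_neg at hlt
  have hX1 : X.ncard = 1 := by
    have : 0 < X.ncard := (Set.ncard_pos (Set.toFinite _)).mpr ⟨v, hv⟩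
    omega
  obtain ⟨v₀, hv₀⟩ := Set.ncard_eq_one.mp hX1
  subst hv₀
  rcases hv with rfl
  -- now X = {v}, with u ∉ {v} and G.Adj v u
  have hadj : G.Adj v u := G.mem_edgeSet.mp he
  have hdegv := three_le_degree G h3 v
  have hdegu := three_le_degree G h3 u
  -- the new partition {v, u}
  have hX'card : ({v, u} : Set V).ncard ≤ 2 := by
    apply le_trans (Set.ncard_insert_le v {u})
    simp
  have hX'c : (G.induce ({v, u} : Set V)ᶜ).Connected := h3.2 {v, u} hX'card
  have hX'cne : ({v, u} : Set V)ᶜ.Nonempty := hX'c.nonempty.elim fun x => ⟨x.val, x.2⟩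
  have hbond : IsBond G (crossEdges G ({v, u} : Set V)) :=
    isBond_crossEdges G hG ⟨v, Or.inl rfl⟩ hX'cne (induce_pair_connected G hadj) hX'c
  have hle := hB.2 _ hbond
  rw [crossEdges_singleton] at hle
  rw [ncard_incidenceSet] at hle
  -- lower bound on crossEdges G X'
  have hmemv : s(v, u) ∈ G.incidenceSet v := ⟨G.mem_edgeSet.mpr hadj, by simp⟩
  have hmemu : s(v, u) ∈ G.incidenceSet u := ⟨G.mem_edgeSet.mpr hadj, by simp⟩
  have hinter : G.incidenceSet v ∩ G.incidenceSet u = {s(v, u)} :=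
    G.incidenceSet_inter_incidenceSet_of_adj hadj
  have hdisj : Disjoint (G.incidenceSet v \ {s(v, u)}) (G.incidenceSet u \ {s(v, u)}) := by
    rw [Set.disjoint_iff]
    rintro e ⟨⟨hev, hne⟩, ⟨heu, _⟩⟩
    exact hne (hinter ▸ ⟨hev, heu⟩)
  have hunion : ((G.incidenceSet v \ {s(v, u)}) ∪ (G.incidenceSet u \ {s(v, u)})).ncard
      = (G.degree v - 1) + (G.degree u - 1) := by
    rw [Set.ncard_union_eq hdisj (Set.toFinite _) (Set.toFinite _),
      Set.ncard_diff_singleton_of_mem hmemv,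
      Set.ncard_diff_singleton_of_mem hmemu,
      ncard_incidenceSet, ncard_incidenceSet]
  have hsub := subset_crossEdges_pair G (v := v) (u := u)
  have hge := Set.ncard_le_ncard hsub (Set.toFinite _)
  rw [hunion] at hge
  omega

end Aux

/-- in a 3-connected graph, each side of a largest bond has at least 2 vertices. -/
theorem largest_bond_sides_ge_two {V : Type*} [Fintype V] (G : SimpleGraph V)
    (h3 : ThreeConnected G) (X : Set V)
    (hX : (G.induce X).Connected) (hY : (G.induce Xᶜ).Connected)
    (hB : IsLargestBond G (crossEdges G X)) :
    2 ≤ X.ncard ∧ 2 ≤ Xᶜ.ncard := by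
  refine ⟨side_ge_two G h3 X hX hY hB, side_ge_two G h3 Xᶜ hY ?_ ?_⟩
  · rwa [compl_compl]
  · rwa [crossEdges_compl]
end

section
/- For every n ≥ 3, every k with 1 ≤ k < n/2, and every integer t with 1 ≤ t ≤ n - k, the generalized Petersen graph P(n, k) has a bond of size t + 2. In particular, taking A = {x_1, ..., x_t} and B = V(P(n,k)) \ A, the edge set [A, B] is a bond of size t + 2. -/
open SimpleGraph

/-- The generalized Petersen graph `P(n, k)`: outer vertices `Sum.inl i` ("xᵢ") and
inner vertices `Sum.inr i` ("yᵢ"), with edges `xᵢxᵢ₊₁`, `xᵢyᵢ`, `yᵢyᵢ₊ₖ` (indices mod n). -/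
def GPetersen (n k : ℕ) : SimpleGraph (ZMod n ⊕ ZMod n) :=
  SimpleGraph.fromRel (fun a b =>
    (∃ i : ZMod n, a = Sum.inl i ∧ b = Sum.inl (i + 1)) ∨
    (∃ i : ZMod n, a = Sum.inl i ∧ b = Sum.inr i) ∨
    (∃ i : ZMod n, a = Sum.inr i ∧ b = Sum.inr (i + (k : ZMod n))))


lemma crossEdges_not_mem {V : Type*} (G : SimpleGraph V) (X : Set V) {u v : V}
    (h : (u ∈ X ∧ v ∈ X) ∨ (u ∈ Xᶜ ∧ v ∈ Xᶜ)) : s(u, v) ∉ crossEdges G X := by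
  rintro ⟨-, x, hx, y, hy, hxy⟩
  rw [Sym2.eq_iff] at hxy
  rcases hxy with ⟨rfl, rfl⟩ | ⟨rfl, rfl⟩ <;> rcases h with ⟨h1, h2⟩ | ⟨h1, h2⟩ <;>
    simp_all [Set.mem_compl_iff]

lemma walk_stays {V : Type*} (G : SimpleGraph V) (X : Set V) {u v : V}
    (w : (G.deleteEdges (crossEdges G X)).Walk u v) (hu : u ∈ X) : v ∈ X := by
  induction w with
  | nil => exact hu
  | cons h p ih =>
    rename_i a b c
    apply ih
    by_contra hb
    rw [deleteEdges_adj] at h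
    exact h.2 ⟨(G.mem_edgeSet.mpr h.1), a, hu, b, hb, rfl⟩

lemma reach_of_induce {V : Type*} (G : SimpleGraph V) (Y : Set V) (T : Set (Sym2 V))
    (hdis : ∀ u v : V, u ∈ Y → v ∈ Y → s(u, v) ∉ T) {a u : V} (ha : a ∈ Y) (hu : u ∈ Y)
    (h : (G.induce Y).Reachable ⟨a, ha⟩ ⟨u, hu⟩) : (G.deleteEdges T).Reachable a u := by
  let f : G.induce Y →g G.deleteEdges T :=
    ⟨Subtype.val, fun {p q} hpq => deleteEdges_adj.mpr ⟨hpq, hdis _ _ p.2 q.2⟩⟩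
  exact h.map f

lemma bond_of_connected_parts {V : Type*} (G : SimpleGraph V) (X : Set V)
    (hX : (G.induce X).Connected) (hXc : (G.induce Xᶜ).Connected)
    (hne : (crossEdges G X).Nonempty) : IsBond G (crossEdges G X) := by
  obtain ⟨⟨x0, hx0⟩⟩ := hX.nonempty
  obtain ⟨⟨y0, hy0⟩⟩ := hXc.nonempty
  refine ⟨hne, ⟨fun e he => he.1, fun hcon => ?_⟩, fun T hT hTne hTcut => ?_⟩
  · obtain ⟨w⟩ := hcon.preconnected x0 y0
    exact hy0 (walk_stays G X w hx0)
  · -- show (G.deleteEdges T).Connected, contradicting hTcut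
    obtain ⟨e, heS, heT⟩ := Set.exists_of_ssubset hT
    obtain ⟨heE, a, ha, b, hb, rfl⟩ := heS
    apply hTcut.2
    have hab : (G.deleteEdges T).Adj a b := by
      rw [deleteEdges_adj]
      exact ⟨(G.mem_edgeSet).mp heE, heT⟩
    -- hom from induce X
    have reachX : ∀ u (hu : u ∈ X), (G.deleteEdges T).Reachable a u := fun u hu =>
      reach_of_induce G X T
        (fun p q hp hq hm => crossEdges_not_mem G X (Or.inl ⟨hp, hq⟩) (hT.1 hm)) ha hu
        (hX.preconnected ⟨a, ha⟩ ⟨u, hu⟩)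
    have reachXc : ∀ u (hu : u ∈ Xᶜ), (G.deleteEdges T).Reachable b u := fun u hu =>
      reach_of_induce G Xᶜ T
        (fun p q hp hq hm => crossEdges_not_mem G X (Or.inr ⟨hp, hq⟩) (hT.1 hm)) hb hu
        (hXc.preconnected ⟨b, hb⟩ ⟨u, hu⟩)
    rw [connected_iff]
    refine ⟨fun u v => ?_, ⟨a⟩⟩
    have key : ∀ u, (G.deleteEdges T).Reachable a u := fun u => by
      by_cases hu : u ∈ X
      · exact reachX u hu
      · exact (hab.reachable).trans (reachXc u hu)
    exact (key u).symm.trans (key v)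

section
variable {n k : ℕ}

lemma zmod_castinj (hn : 0 < n) {a b : ℕ} (ha : a < n) (hb : b < n)
    (h : (a : ZMod n) = (b : ZMod n)) : a = b := by
  haveI : NeZero n := ⟨by omega⟩
  have := congrArg ZMod.val h
  rwa [ZMod.val_cast_of_lt ha, ZMod.val_cast_of_lt hb] at this

lemma zmod_cast_eq_iff (hn : 0 < n) (a b : ℕ) :
    (a : ZMod n) = (b : ZMod n) ↔ a % n = b % n := by
  rw [ZMod.natCast_eq_natCast_iff]; rfl

lemma gp_adj_outer (hn : 3 ≤ n) (i : ZMod n) :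
    (GPetersen n k).Adj (Sum.inl i) (Sum.inl (i + 1)) := by
  rw [GPetersen, fromRel_adj]
  refine ⟨?_, Or.inl (Or.inl ⟨i, rfl, rfl⟩)⟩
  simp only [ne_eq, Sum.inl.injEq]
  intro h
  have h1 : ((1 : ℕ) : ZMod n) = ((0 : ℕ) : ZMod n) := by
    have := congrArg (· - i) h
    simpa using this.symm
  have := zmod_castinj (by omega) (by omega) (by omega) h1
  omega

lemma gp_adj_spoke (i : ZMod n) : (GPetersen n k).Adj (Sum.inl i) (Sum.inr i) := by
  rw [GPetersen, fromRel_adj]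
  exact ⟨by simp, Or.inl (Or.inr (Or.inl ⟨i, rfl, rfl⟩))⟩

lemma gp_adj_inner (hk1 : 1 ≤ k) (hkn : k < n) (i : ZMod n) :
    (GPetersen n k).Adj (Sum.inr i) (Sum.inr (i + (k : ZMod n))) := by
  rw [GPetersen, fromRel_adj]
  refine ⟨?_, Or.inl (Or.inr (Or.inr ⟨i, rfl, rfl⟩))⟩
  simp only [ne_eq, Sum.inr.injEq]
  intro h
  have h1 : ((k : ℕ) : ZMod n) = ((0 : ℕ) : ZMod n) := by
    have := congrArg (· - i) h
    simpa using this.symm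
  have := zmod_castinj (by omega) hkn (by omega) h1
  omega

end

section
variable (n k t : ℕ)

/-- The outer index set. -/
def gpA : Set (ZMod n) := {i : ZMod n | ∃ j : ℕ, 1 ≤ j ∧ j ≤ t ∧ i = (j : ZMod n)}

lemma gp_memA {j : ℕ} (h1 : 1 ≤ j) (h2 : j ≤ t) :
    (Sum.inl ((j : ZMod n)) : ZMod n ⊕ ZMod n) ∈ Sum.inl '' gpA n t :=
  ⟨(j : ZMod n), ⟨j, h1, h2, rfl⟩, rfl⟩

lemma gp_notA (hn : 0 < n) (htn : t < n) {m : ℕ} (hm1 : t + 1 ≤ m) (hm2 : m ≤ n) :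
    (Sum.inl ((m : ZMod n)) : ZMod n ⊕ ZMod n) ∈ (Sum.inl '' gpA n t)ᶜ := by
  rintro ⟨i, ⟨j, hj1, hj2, rfl⟩, hi⟩
  have : (m : ZMod n) = (j : ZMod n) := (Sum.inl.injEq _ _ ▸ hi).symm
  rw [zmod_cast_eq_iff hn] at this
  have hjn : j % n = j := Nat.mod_eq_of_lt (by omega)
  rcases Nat.lt_or_ge m n with h | h
  · rw [Nat.mod_eq_of_lt h, hjn] at this; omega
  · have : m = n := by omega
    subst this
    rw [Nat.mod_self, hjn] at this; omega

lemma gp_inr_notA (i : ZMod n) :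
    (Sum.inr i : ZMod n ⊕ ZMod n) ∈ (Sum.inl '' gpA n t)ᶜ := by
  rintro ⟨x, -, h⟩; exact absurd h (by simp)

lemma gp_X_connected (hn : 3 ≤ n) (ht1 : 1 ≤ t) (htn : t < n) :
    ((GPetersen n k).induce (Sum.inl '' gpA n t)).Connected := by
  rw [connected_iff]
  refine ⟨?_, ⟨⟨_, gp_memA n t ht1 le_rfl⟩⟩⟩
  have key : ∀ j : ℕ, ∀ hj : 1 ≤ j, ∀ h : j ≤ t,
      ((GPetersen n k).induce (Sum.inl '' gpA n t)).Reachable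
        ⟨Sum.inl ((1 : ℕ) : ZMod n), gp_memA n t le_rfl ht1⟩
        ⟨Sum.inl ((j : ZMod n)), gp_memA n t hj h⟩ := by
    intro j hj
    induction j, hj using Nat.le_induction with
    | base => intro _; rfl
    | succ m hm ih =>
      intro h
      refine (ih (by omega)).trans (Adj.reachable ?_)
      show (GPetersen n k).Adj (Sum.inl ((m : ZMod n))) (Sum.inl (((m + 1 : ℕ) : ZMod n)))
      have : ((m + 1 : ℕ) : ZMod n) = (m : ZMod n) + 1 := by push_cast; ring
      rw [this]
      exact gp_adj_outer hn _
  rintro ⟨u, i, ⟨j, hj1, hj2, rfl⟩, rfl⟩ ⟨v, i', ⟨j', hj1', hj2', rfl⟩, rfl⟩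
  exact (key j hj1 hj2).symm.trans (key j' hj1' hj2')

end

section
variable (n k t : ℕ)

lemma gp_exists_hit (hn : 3 ≤ n) (hk1 : 1 ≤ k) (htk : t + k ≤ n) (i : ZMod n) :
    ∃ m : ℕ, t + 1 ≤ m ∧ m ≤ n ∧ ∃ c : ZMod n, (m : ZMod n) = i + c * (k : ZMod n) := by
  haveI : NeZero n := ⟨by omega⟩
  set d := Nat.gcd n k with hd
  have hd1 : 1 ≤ d := Nat.gcd_pos_of_pos_right n (by omega)
  have hdk : d ≤ k := Nat.le_of_dvd (by omega) (Nat.gcd_dvd_right n k)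
  set v := i.val with hv
  have hiv : ((v : ℕ) : ZMod n) = i := ZMod.natCast_rightInverse i
  set r : ℤ := ((v : ℤ) - (t + 1)) % d with hr
  have hr0 : 0 ≤ r := Int.emod_nonneg _ (by exact_mod_cast (by omega : d ≠ 0))
  have hrd : r < d := Int.emod_lt_of_pos _ (by exact_mod_cast hd1)
  have hrdn : r.toNat < d := by omega
  refine ⟨t + 1 + r.toNat, by omega, by omega, ?_⟩
  have hdvd : (d : ℤ) ∣ (((t + 1 + r.toNat : ℕ) : ℤ) - v) := by
    have h1 : (d : ℤ) ∣ ((v : ℤ) - (t + 1) - r) := Int.dvd_self_sub_of_emod_eq rfl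
    have hmz : ((t + 1 + r.toNat : ℕ) : ℤ) - v = -((v : ℤ) - (t + 1) - r) := by
      push_cast [Int.toNat_of_nonneg hr0]; ring
    rw [hmz]; exact dvd_neg.mpr h1
  obtain ⟨q, hq⟩ := hdvd
  have hbez : (d : ℤ) = n * Nat.gcdA n k + k * Nat.gcdB n k := Nat.gcd_eq_gcd_ab n k
  refine ⟨((Nat.gcdB n k * q : ℤ) : ZMod n), ?_⟩
  have key : ((t + 1 + r.toNat : ℕ) : ℤ) = v + (Nat.gcdB n k * q) * k + n * (Nat.gcdA n k * q) := by
    linear_combination hq + q * hbez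
  have := congrArg (fun z : ℤ => (z : ZMod n)) key
  simp only [Int.cast_add, Int.cast_mul, Int.cast_natCast] at this
  rw [ZMod.natCast_self] at this
  rw [this, hiv]
  push_cast
  ring
end

section
variable (n k t : ℕ)

lemma gp_Xc_connected (hn : 3 ≤ n) (hk1 : 1 ≤ k) (hk2 : 2 * k < n) (ht1 : 1 ≤ t)
    (ht2 : t ≤ n - k) :
    ((GPetersen n k).induce (Sum.inl '' gpA n t)ᶜ).Connected := by
  haveI : NeZero n := ⟨by omega⟩
  have htk : t + k ≤ n := by omega
  have htn : t < n := by omega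
  set X : Set (ZMod n ⊕ ZMod n) := Sum.inl '' gpA n t with hX
  have h0mem : (Sum.inl (0 : ZMod n) : ZMod n ⊕ ZMod n) ∈ Xᶜ := by
    have := gp_notA n t (m := n) (by omega) htn (by omega) le_rfl
    rwa [ZMod.natCast_self] at this
  set x0 : ↥Xᶜ := ⟨Sum.inl (0 : ZMod n), h0mem⟩ with hx0
  set H := (GPetersen n k).induce Xᶜ with hH
  -- outer reachability
  have reachOutAux : ∀ j : ℕ, j ≤ n - t - 1 → ∀ u : ↥Xᶜ,
      u.val = Sum.inl (((n - j : ℕ) : ZMod n)) → H.Reachable x0 u := by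
    intro j
    induction j with
    | zero =>
      intro _ u hu
      have : u = x0 := Subtype.ext (by rw [hu]; simp [ZMod.natCast_self, hx0])
      rw [this]
    | succ j ih =>
      intro hj u hu
      have hmem : (Sum.inl (((n - j : ℕ) : ZMod n)) : ZMod n ⊕ ZMod n) ∈ Xᶜ :=
        gp_notA n t (by omega) htn (by omega) (by omega)
      refine (ih (by omega) ⟨_, hmem⟩ rfl).trans (Adj.reachable ?_)
      show (GPetersen n k).Adj (Sum.inl (((n - j : ℕ) : ZMod n))) u.val
      rw [hu]
      have hcast : ((n - j : ℕ) : ZMod n) = ((n - (j + 1) : ℕ) : ZMod n) + 1 := by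
        rw [show (n - j : ℕ) = (n - (j + 1)) + 1 by omega]; push_cast; ring
      rw [hcast]
      exact (gp_adj_outer hn _).symm
  have reachOut : ∀ m : ℕ, t + 1 ≤ m → m ≤ n → ∀ u : ↥Xᶜ,
      u.val = Sum.inl ((m : ZMod n)) → H.Reachable x0 u := by
    intro m h1 h2 u hu
    refine reachOutAux (n - m) (by omega) u ?_
    rw [hu, show n - (n - m) = m by omega]
  -- inner chain
  have reachInr : ∀ (s : ℕ) (i : ZMod n), ∀ u : ↥Xᶜ,
      u.val = Sum.inr (i + (s : ZMod n) * (k : ZMod n)) →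
      H.Reachable ⟨Sum.inr i, gp_inr_notA n t i⟩ u := by
    intro s
    induction s with
    | zero =>
      intro i u hu
      have : u = ⟨Sum.inr i, gp_inr_notA n t i⟩ := Subtype.ext (by rw [hu]; simp)
      rw [this]
    | succ s ih =>
      intro i u hu
      refine (ih i ⟨Sum.inr (i + (s : ZMod n) * (k : ZMod n)), gp_inr_notA n t _⟩ rfl).trans
        (Adj.reachable ?_)
      show (GPetersen n k).Adj (Sum.inr (i + (s : ZMod n) * (k : ZMod n))) u.val
      rw [hu]
      have hcast : i + ((s + 1 : ℕ) : ZMod n) * (k : ZMod n)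
          = (i + (s : ZMod n) * (k : ZMod n)) + (k : ZMod n) := by push_cast; ring
      rw [hcast]
      exact gp_adj_inner hk1 (by omega) _
  -- full reachability
  have reachAll : ∀ u : ↥Xᶜ, H.Reachable x0 u := by
    rintro ⟨u, hu⟩
    rcases u with i | i
    · by_cases h0 : i.val = 0
      · have : (⟨Sum.inl i, hu⟩ : ↥Xᶜ) = x0 :=
          Subtype.ext (by simp [(ZMod.val_eq_zero i).mp h0, hx0])
        rw [this]
      · have hvlt : i.val < n := ZMod.val_lt i
        have h1 : t + 1 ≤ i.val := by
          by_contra h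
          exact hu ⟨i, ⟨i.val, by omega, by omega, (ZMod.natCast_rightInverse i).symm⟩, rfl⟩
        exact reachOut i.val h1 (by omega) ⟨Sum.inl i, hu⟩
          (by rw [ZMod.natCast_rightInverse i])
    · obtain ⟨m, hm1, hm2, c, hc⟩ := gp_exists_hit n k t hn hk1 htk i
      have hmmem : (Sum.inl ((m : ZMod n)) : ZMod n ⊕ ZMod n) ∈ Xᶜ :=
        gp_notA n t (by omega) htn hm1 hm2
      have hymem : (Sum.inr ((m : ZMod n)) : ZMod n ⊕ ZMod n) ∈ Xᶜ := gp_inr_notA n t _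
      have r1 : H.Reachable x0 ⟨Sum.inl ((m : ZMod n)), hmmem⟩ := reachOut m hm1 hm2 _ rfl
      have r2 : H.Adj ⟨Sum.inl ((m : ZMod n)), hmmem⟩ ⟨Sum.inr ((m : ZMod n)), hymem⟩ :=
        gp_adj_spoke _
      have r3 : H.Reachable ⟨Sum.inr i, gp_inr_notA n t i⟩ ⟨Sum.inr ((m : ZMod n)), hymem⟩ := by
        refine reachInr c.val i _ ?_
        show Sum.inr ((m : ZMod n)) = Sum.inr (i + ((c.val : ℕ) : ZMod n) * (k : ZMod n))
        rw [ZMod.natCast_rightInverse c, hc]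
      have : (⟨Sum.inr i, hu⟩ : ↥Xᶜ) = ⟨Sum.inr i, gp_inr_notA n t i⟩ := rfl
      rw [this]
      exact ((r1.trans r2.reachable).trans r3.symm)
  rw [connected_iff]
  exact ⟨fun u v => (reachAll u).symm.trans (reachAll v), ⟨x0⟩⟩

end

section
variable (n k t : ℕ)

lemma gp_cross_eq (hn : 3 ≤ n) (hk1 : 1 ≤ k) (hk2 : 2 * k < n) (ht1 : 1 ≤ t)
    (ht2 : t ≤ n - k) :
    crossEdges (GPetersen n k) (Sum.inl '' gpA n t) =
      insert s((Sum.inl (0 : ZMod n) : ZMod n ⊕ ZMod n), Sum.inl (1 : ZMod n))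
        (insert s((Sum.inl ((t : ℕ) : ZMod n) : ZMod n ⊕ ZMod n), Sum.inl (((t + 1 : ℕ) : ZMod n)))
          ((fun j : ℕ => s((Sum.inl ((j : ℕ) : ZMod n) : ZMod n ⊕ ZMod n), Sum.inr ((j : ℕ) : ZMod n))) ''
            Set.Icc 1 t)) := by
  haveI : NeZero n := ⟨by omega⟩
  have htn : t < n := by omega
  have h0c : (Sum.inl (0 : ZMod n) : ZMod n ⊕ ZMod n) ∈ (Sum.inl '' gpA n t)ᶜ := by
    have := gp_notA n t (m := n) (by omega) htn (by omega) le_rfl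
    rwa [ZMod.natCast_self] at this
  have ht1c : (Sum.inl (((t + 1 : ℕ) : ZMod n)) : ZMod n ⊕ ZMod n) ∈ (Sum.inl '' gpA n t)ᶜ :=
    gp_notA n t (by omega) htn le_rfl (by omega)
  ext e
  constructor
  · rintro ⟨heE, x, ⟨i, ⟨j, hj1, hj2, rfl⟩, rfl⟩, y, hy, rfl⟩
    have hadj : (GPetersen n k).Adj (Sum.inl ((j : ZMod n))) y := ((GPetersen n k).mem_edgeSet).mp heE
    rw [GPetersen, fromRel_adj] at hadj
    obtain ⟨hne, hr⟩ := hadj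
    rcases hr with (⟨i, hxi, hyi⟩ | ⟨i, hxi, hyi⟩ | ⟨i, hxi, hyi⟩) |
        (⟨i, hyi, hxi⟩ | ⟨i, hyi, hxi⟩ | ⟨i, hyi, hxi⟩)
    · -- y = x + 1
      have hij : i = ((j : ZMod n)) := (Sum.inl.injEq _ _ ▸ hxi).symm
      subst hij hyi
      have hjt : j = t := by
        by_contra hne'
        exact hy ⟨(j : ZMod n) + 1, ⟨j + 1, by omega, by omega, by push_cast; ring⟩, rfl⟩
      subst hjt
      have : ((j : ZMod n)) + 1 = (((j + 1 : ℕ) : ZMod n)) := by push_cast; ring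
      rw [this]
      exact Set.mem_insert_of_mem _ (Set.mem_insert _ _)
    · -- y = inr j
      have hij : i = ((j : ZMod n)) := (Sum.inl.injEq _ _ ▸ hxi).symm
      subst hij hyi
      exact Set.mem_insert_of_mem _ (Set.mem_insert_of_mem _ ⟨j, ⟨hj1, hj2⟩, rfl⟩)
    · exact absurd hxi (by simp)
    · -- x = inl (i+1), y = inl i
      subst hyi
      have hij : i + 1 = ((j : ZMod n)) := (Sum.inl.injEq _ _ ▸ hxi).symm
      have hj1' : j = 1 := by
        by_contra hne'
        refine hy ⟨i, ⟨j - 1, by omega, by omega, ?_⟩, rfl⟩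
        have : (((j - 1 : ℕ) : ZMod n)) + 1 = ((j : ZMod n)) := by
          rw [show (j : ℕ) = (j - 1) + 1 by omega]; push_cast; ring
        rw [← hij] at this
        exact (add_right_cancel this).symm
      subst hj1'
      have hi0 : i = 0 := by
        have : i + 1 = 0 + 1 := by rw [hij]; push_cast; ring
        exact add_right_cancel this
      subst hi0
      rw [Sym2.eq_swap]
      norm_num
    · exact absurd hxi (by simp)
    · exact absurd hxi (by simp)
  · intro he
    rcases he with rfl | rfl | ⟨j, ⟨hj1, hj2⟩, rfl⟩
    · refine ⟨?_, Sum.inl (1 : ZMod n), by simpa using gp_memA n t le_rfl ht1,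
        Sum.inl (0 : ZMod n), h0c, Sym2.eq_swap.symm⟩
      rw [SimpleGraph.mem_edgeSet]
      simpa using gp_adj_outer hn (0 : ZMod n)
    · refine ⟨?_, Sum.inl ((t : ℕ) : ZMod n), gp_memA n t ht1 le_rfl,
        Sum.inl (((t + 1 : ℕ) : ZMod n)), ht1c, ?_⟩
      · rw [SimpleGraph.mem_edgeSet]
        have : (((t + 1 : ℕ) : ZMod n)) = ((t : ℕ) : ZMod n) + 1 := by push_cast; ring
        rw [this]
        exact gp_adj_outer hn _
      · rfl
    · exact ⟨((GPetersen n k).mem_edgeSet).mpr (gp_adj_spoke _), Sum.inl ((j : ZMod n)), gp_memA n t hj1 hj2,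
        Sum.inr ((j : ZMod n)), gp_inr_notA n t _, rfl⟩

lemma gp_cross_ncard (hn : 3 ≤ n) (hk1 : 1 ≤ k) (hk2 : 2 * k < n) (ht1 : 1 ≤ t)
    (ht2 : t ≤ n - k) :
    (crossEdges (GPetersen n k) (Sum.inl '' gpA n t)).ncard = t + 2 := by
  haveI : NeZero n := ⟨by omega⟩
  rw [gp_cross_eq n k t hn hk1 hk2 ht1 ht2]
  set f : ℕ → Sym2 (ZMod n ⊕ ZMod n) :=
    fun j => s((Sum.inl ((j : ℕ) : ZMod n) : ZMod n ⊕ ZMod n), Sum.inr ((j : ℕ) : ZMod n)) with hf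
  have hinj : Set.InjOn f (Set.Icc 1 t) := by
    intro a ha b hb hab
    rw [hf, Sym2.eq_iff] at hab
    simp only [Set.mem_Icc] at ha hb
    rcases hab with ⟨h1, -⟩ | ⟨h1, -⟩
    · exact zmod_castinj (by omega) (by omega : a < n) (by omega : b < n) (by simpa using h1)
    · exact absurd h1 (by simp)
  have himfin : (f '' Set.Icc 1 t).Finite := (Set.finite_Icc 1 t).image f
  have hbnot : s((Sum.inl ((t : ℕ) : ZMod n) : ZMod n ⊕ ZMod n), Sum.inl (((t + 1 : ℕ) : ZMod n)))
      ∉ f '' Set.Icc 1 t := by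
    rintro ⟨j, -, hj⟩
    rw [hf, Sym2.eq_iff] at hj
    rcases hj with ⟨-, h2⟩ | ⟨-, h2⟩ <;> simp_all
  have hanot : s((Sum.inl (0 : ZMod n) : ZMod n ⊕ ZMod n), Sum.inl (1 : ZMod n)) ∉
      insert s((Sum.inl ((t : ℕ) : ZMod n) : ZMod n ⊕ ZMod n), Sum.inl (((t + 1 : ℕ) : ZMod n)))
        (f '' Set.Icc 1 t) := by
    rintro (h | ⟨j, -, hj⟩)
    · rw [Sym2.eq_iff] at h
      rcases h with ⟨h1, h2⟩ | ⟨h1, h2⟩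
      · have h1' : ((0 : ℕ) : ZMod n) = ((t : ℕ) : ZMod n) := by simpa using h1
        have := zmod_castinj (n := n) (by omega) (by omega) (by omega : t < n) h1'
        omega
      · have h2' : ((1 : ℕ) : ZMod n) = ((t : ℕ) : ZMod n) := by simpa using h2
        have ht1' := zmod_castinj (n := n) (by omega) (by omega) (by omega : t < n) h2'
        have h1' : ((0 : ℕ) : ZMod n) = ((t + 1 : ℕ) : ZMod n) := by simpa using h1
        have := zmod_castinj (n := n) (by omega) (by omega) (by omega : t + 1 < n) h1'
        omega
    · rw [hf, Sym2.eq_iff] at hj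
      rcases hj with ⟨-, h2⟩ | ⟨-, h2⟩ <;> simp_all
  rw [Set.ncard_insert_of_notMem hanot (himfin.insert _),
    Set.ncard_insert_of_notMem hbnot himfin,
    Set.ncard_image_of_injOn hinj]
  rw [← Finset.coe_Icc, Set.ncard_coe_finset, Nat.card_Icc]
  omega

end

/-- for `1 ≤ t ≤ n - k`, the partition `A = {x₁, …, x_t}` versus the rest gives
a bond of `P(n,k)` of size `t + 2`. -/
theorem gPetersen_bond_of_outer_path (n k t : ℕ) (hn : 3 ≤ n) (hk1 : 1 ≤ k)
    (hk2 : 2 * k < n) (ht1 : 1 ≤ t) (ht2 : t ≤ n - k) :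
    IsBond (GPetersen n k)
        (crossEdges (GPetersen n k)
          (Sum.inl '' {i : ZMod n | ∃ j : ℕ, 1 ≤ j ∧ j ≤ t ∧ i = (j : ZMod n)})) ∧
      (crossEdges (GPetersen n k)
          (Sum.inl '' {i : ZMod n | ∃ j : ℕ, 1 ≤ j ∧ j ≤ t ∧ i = (j : ZMod n)})).ncard
        = t + 2 := by
  have hset : {i : ZMod n | ∃ j : ℕ, 1 ≤ j ∧ j ≤ t ∧ i = (j : ZMod n)} = gpA n t := rfl
  rw [hset]
  refine ⟨bond_of_connected_parts _ _ (gp_X_connected n k t hn ht1 (by omega))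
    (gp_Xc_connected n k t hn hk1 hk2 ht1 ht2) ?_,
    gp_cross_ncard n k t hn hk1 hk2 ht1 ht2⟩
  rw [gp_cross_eq n k t hn hk1 hk2 ht1 ht2]
  exact ⟨_, Set.mem_insert _ _⟩
end

section
/- For every n ≥ 3, every k with 1 ≤ k < n/2, and every integer i with 1 ≤ i ≤ k, let A = {x_1, ..., x_{n-k}, y_1, ..., y_i} and B = V(P(n,k)) \ A. Then [A, B] is a bond of P(n, k) of size n - k + i + 2. -/
open SimpleGraph

/-!
Every edge of `P(n, k)` is `xₐxₐ₊₁`, `xₐyₐ` or `yₐyₐ₊ₖ` for a unique `a : ZMod n` (this uses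
`2 ≠ 0` and `2k ≠ 0` in `ZMod n`). Hence for a vertex set with outer part `S` and inner part `T`,
the cut splits as `S ∆ (S - 1)`, `S ∆ T` and `T ∆ (T - k)`. For `S = {1, …, n - k}` and
`T = {1, …, i}` these have sizes `2`, `n - k - i` and `2i`, the last because `T` and `T - k` are
disjoint when `i ≤ k < n - k`.

The cut is a bond because both sides induce connected subgraphs. On `A` every vertex other
than `x₁` has a neighbour in `A` closer to `x₁` (`xₐ → xₐ₋₁`, `yₐ → xₐ`). On the complement
every vertex other than `x₀` has a neighbour closer to `x₀` going upwards: `xₐ → xₐ₊₁`, and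
`yₐ → xₐ` or, if `xₐ ∈ A`, `yₐ → yₐ₊ₖ`.
-/

open SimpleGraph Sum Function
open scoped symmDiff

namespace SimpleGraph

variable {V : Type*} {G : SimpleGraph V} {X : Set V}

lemma mk_mem_crossEdges_iff {u v : V} :
    s(u, v) ∈ crossEdges G X ↔ G.Adj u v ∧ Xor (u ∈ X) (v ∈ X) := by
  constructor
  · rintro ⟨hE, x, hx, y, hy, hxy⟩
    rcases Sym2.eq_iff.1 hxy with ⟨rfl, rfl⟩ | ⟨rfl, rfl⟩
    · exact ⟨hE, Or.inl ⟨hx, hy⟩⟩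
    · exact ⟨hE, Or.inr ⟨hx, hy⟩⟩
  · rintro ⟨hadj, ⟨hu, hv⟩ | ⟨hv, hu⟩⟩
    · exact ⟨hadj, u, hu, v, hv, rfl⟩
    · exact ⟨hadj, v, hv, u, hu, Sym2.eq_swap⟩

lemma crossEdges_compl : crossEdges G Xᶜ = crossEdges G X := by
  ext e
  induction e using Sym2.ind with
  | _ u v => simp only [mk_mem_crossEdges_iff, Set.mem_compl_iff, xor_not_not]

lemma Reachable.mem_iff_of_deleteEdges_crossEdges {u v : V}
    (h : (G.deleteEdges (crossEdges G X)).Reachable u v) : u ∈ X ↔ v ∈ X := by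
  obtain ⟨w⟩ := h
  induction w with
  | nil => rfl
  | cons hadj _ ih =>
    rw [deleteEdges_adj, mk_mem_crossEdges_iff, Xor] at hadj
    refine Iff.trans ?_ ih
    tauto

lemma Reachable.deleteEdges_of_induce {T : Set (Sym2 V)} (hT : T ⊆ crossEdges G X) {u v : X}
    (h : (G.induce X).Reachable u v) : (G.deleteEdges T).Reachable u v :=
  h.map ⟨Subtype.val, fun {p q} hpq => deleteEdges_adj.2
    ⟨hpq, fun hmem => (mk_mem_crossEdges_iff.1 (hT hmem)).2.elim (·.2 q.2) (·.2 p.2)⟩⟩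

theorem isBond_crossEdges (hX : (G.induce X).Connected) (hXc : (G.induce Xᶜ).Connected)
    (hne : (crossEdges G X).Nonempty) : IsBond G (crossEdges G X) := by
  refine ⟨hne, ⟨fun e he => he.1, fun hconn => ?_⟩, ?_⟩
  · obtain ⟨_, -, x, hx, y, hy, rfl⟩ := hne
    exact hy ((hconn.preconnected x y).mem_iff_of_deleteEdges_crossEdges.1 hx)
  · rintro T hT - ⟨-, hdisc⟩
    obtain ⟨_, ⟨hE, a, ha, b, hb, rfl⟩, hfT⟩ := Set.exists_of_ssubset hT
    have hab : (G.deleteEdges T).Adj a b := deleteEdges_adj.2 ⟨hE, hfT⟩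
    have hTc : T ⊆ crossEdges G Xᶜ := by rw [crossEdges_compl]; exact hT.1
    have reach_a : ∀ u, (G.deleteEdges T).Reachable u a := by
      intro u
      by_cases hu : u ∈ X
      · exact (hX.preconnected ⟨u, hu⟩ ⟨a, ha⟩).deleteEdges_of_induce hT.1
      · exact ((hXc.preconnected ⟨u, hu⟩ ⟨b, hb⟩).deleteEdges_of_induce hTc).trans
          hab.symm.reachable
    exact hdisc ((connected_iff _).2 ⟨fun u v => (reach_a u).trans (reach_a v).symm, ⟨a⟩⟩)

lemma induce_connected_of_exists_adj_lt {s : Set V} {r : V} (hr : r ∈ s) (μ : V → ℕ)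
    (h : ∀ v ∈ s, v ≠ r → ∃ w ∈ s, G.Adj v w ∧ μ w < μ v) : (G.induce s).Connected := by
  have reach_r : ∀ m, ∀ v (hv : v ∈ s), μ v = m → (G.induce s).Reachable ⟨v, hv⟩ ⟨r, hr⟩ := by
    intro m
    induction m using Nat.strong_induction_on with
    | _ m ih =>
      rintro v hv rfl
      by_cases hvr : v = r
      · subst hvr; rfl
      obtain ⟨w, hw, hadj, hlt⟩ := h v hv hvr
      exact (induce_adj.2 hadj).reachable.trans (ih _ hlt w hw rfl)
  exact (connected_iff _).2
    ⟨fun u v => (reach_r _ u u.2 rfl).trans (reach_r _ v v.2 rfl).symm, ⟨⟨r, hr⟩⟩⟩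

end SimpleGraph

lemma injective_sym2_mk_add {G α : Type*} [AddCommGroup G] {f : G → α} (hf : Injective f)
    {d : G} (hd : d + d ≠ 0) : Injective fun a => s(f a, f (a + d)) := by
  intro a b hab
  rcases Sym2.eq_iff.1 hab with ⟨h, -⟩ | ⟨h₁, h₂⟩
  · exact hf h
  · refine absurd ?_ hd
    calc d + d = (b + d + d) - b := by abel
      _ = 0 := by rw [← hf h₁, hf h₂, sub_self]

lemma ncard_symmDiff_preimage_add_of_disjoint {G : Type*} [AddGroup G] [Finite G] {S : Set G}
    {d : G} (h : Disjoint S ((· + d) ⁻¹' S)) : (S ∆ ((· + d) ⁻¹' S)).ncard = 2 * S.ncard := by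
  rw [h.symmDiff_eq_sup]
  change (S ∪ _).ncard = _
  rw [Set.ncard_union_eq h,
    Set.ncard_preimage_of_injective_subset_range (add_left_injective d)
      fun x _ => add_right_surjective d x, two_mul]

namespace ZMod

variable {n : ℕ}

lemma val_add_cases [NeZero n] (a b : ZMod n) :
    (a + b).val = a.val + b.val ∨ (a + b).val + n = a.val + b.val := by
  rcases lt_or_ge (a.val + b.val) n with h | h
  · exact Or.inl (val_add_of_lt h)
  · exact Or.inr (val_add_val_of_le h).symm

lemma val_add_val_neg [NeZero n] (a : ZMod n) :
    a.val + (-a).val = 0 ∨ a.val + (-a).val = n := by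
  have := val_add_cases a (-a)
  rw [add_neg_cancel, val_zero] at this
  omega

lemma natCast_ne_zero_of_pos_of_lt {m : ℕ} (h0 : 0 < m) (h : m < n) : (m : ZMod n) ≠ 0 := by
  rw [Ne, natCast_eq_zero_iff]
  exact Nat.not_dvd_of_pos_of_lt h0 h

end ZMod

namespace GPetersen

variable {n k L M : ℕ}

def arc (n L : ℕ) : Set (ZMod n) := {v | ∃ j : ℕ, 1 ≤ j ∧ j ≤ L ∧ v = (j : ZMod n)}

lemma mem_arc_iff [NeZero n] (hL : L < n) {a : ZMod n} :
    a ∈ arc n L ↔ 1 ≤ a.val ∧ a.val ≤ L := by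
  constructor
  · rintro ⟨j, h1, h2, rfl⟩
    rw [ZMod.val_natCast_of_lt (by omega)]
    exact ⟨h1, h2⟩
  · rintro ⟨h1, h2⟩
    exact ⟨a.val, h1, h2, (ZMod.natCast_zmod_val a).symm⟩

lemma arc_mono (h : M ≤ L) : arc n M ⊆ arc n L :=
  fun _ ⟨j, h1, h2, hj⟩ => ⟨j, h1, h2.trans h, hj⟩

lemma ncard_arc [NeZero n] (hL : L < n) : (arc n L).ncard = L := by
  have : arc n L = ZMod.val ⁻¹' Set.Icc 1 L := by ext a; exact mem_arc_iff hL
  rw [this, Set.ncard_preimage_of_injective_subset_range (ZMod.val_injective n),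
    Set.ncard_Icc_nat]
  · omega
  · rintro m ⟨-, hm⟩
    exact ⟨m, ZMod.val_natCast_of_lt (by omega)⟩

lemma ncard_symmDiff_arc_of_le [NeZero n] (hM : M ≤ L) (hL : L < n) :
    (arc n L ∆ arc n M).ncard = L - M := by
  rw [symmDiff_of_ge (arc_mono hM), Set.ncard_sdiff (arc_mono hM), ncard_arc hL,
    ncard_arc (by omega)]

lemma symmDiff_arc_preimage_add_one [NeZero n] (hL1 : 1 ≤ L) (hL : L < n) :
    arc n L ∆ ((· + 1) ⁻¹' arc n L) = {0, (L : ZMod n)} := by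
  have : Fact (1 < n) := ⟨by omega⟩
  ext a
  have hsucc := ZMod.val_add_cases a 1
  have hvals := And.intro a.val_lt (a + 1).val_lt
  rw [Set.mem_symmDiff, Set.mem_preimage, Set.mem_insert_iff, Set.mem_singleton_iff,
    mem_arc_iff hL, mem_arc_iff hL, ← ZMod.val_eq_zero, ← (ZMod.val_injective n).eq_iff,
    ZMod.val_natCast_of_lt hL]
  rw [ZMod.val_one] at hsucc
  omega

lemma ncard_symmDiff_arc_preimage_add_one [NeZero n] (hL1 : 1 ≤ L) (hL : L < n) :
    (arc n L ∆ ((· + 1) ⁻¹' arc n L)).ncard = 2 := by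
  rw [symmDiff_arc_preimage_add_one hL1 hL,
    Set.ncard_pair (ZMod.natCast_ne_zero_of_pos_of_lt hL1 hL).symm]

lemma disjoint_arc_preimage_add [NeZero n] (hMk : M ≤ k) (hn : M + k < n) :
    Disjoint (arc n M) ((· + (k : ZMod n)) ⁻¹' arc n M) := by
  rw [Set.disjoint_left]
  intro a ha ha'
  rw [Set.mem_preimage, mem_arc_iff (by omega)] at ha'
  rw [mem_arc_iff (by omega)] at ha
  have hjump := ZMod.val_add_cases a k
  rw [ZMod.val_natCast_of_lt (by omega)] at hjump
  omega

lemma ncard_symmDiff_arc_preimage_add [NeZero n] (hMk : M ≤ k) (hn : M + k < n) :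
    (arc n M ∆ ((· + (k : ZMod n)) ⁻¹' arc n M)).ncard = 2 * M := by
  rw [ncard_symmDiff_preimage_add_of_disjoint (disjoint_arc_preimage_add hMk hn),
    ncard_arc (by omega)]

lemma adj_inl_inl_add_one (h : (1 : ZMod n) ≠ 0) (a : ZMod n) :
    (GPetersen n k).Adj (inl a) (inl (a + 1)) :=
  (fromRel_adj _ _ _).2 ⟨by simpa [eq_comm] using h, Or.inl (Or.inl ⟨a, rfl, rfl⟩)⟩

lemma adj_inl_inr (a : ZMod n) : (GPetersen n k).Adj (inl a) (inr a) :=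
  (fromRel_adj _ _ _).2 ⟨by simp, Or.inl (Or.inr (Or.inl ⟨a, rfl, rfl⟩))⟩

lemma adj_inr_inr_add (h : (k : ZMod n) ≠ 0) (a : ZMod n) :
    (GPetersen n k).Adj (inr a) (inr (a + k)) :=
  (fromRel_adj _ _ _).2
    ⟨by simpa [eq_comm] using h, Or.inl (Or.inr (Or.inr ⟨a, rfl, rfl⟩))⟩

variable {S T : Set (ZMod n)}

lemma inl_mem_image_union {a : ZMod n} :
    (inl a : ZMod n ⊕ ZMod n) ∈ inl '' S ∪ inr '' T ↔ a ∈ S := by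
  simp

lemma inr_mem_image_union {a : ZMod n} :
    (inr a : ZMod n ⊕ ZMod n) ∈ inl '' S ∪ inr '' T ↔ a ∈ T := by
  simp

theorem crossEdges_image_union (h1 : (1 : ZMod n) ≠ 0) (hk : (k : ZMod n) ≠ 0) :
    crossEdges (GPetersen n k) (inl '' S ∪ inr '' T) =
      (fun a => s(inl a, inl (a + 1))) '' (S ∆ ((· + 1) ⁻¹' S)) ∪
      (fun a => s(inl a, inr a)) '' (S ∆ T) ∪
      (fun a => s(inr a, inr (a + (k : ZMod n)))) '' (T ∆ ((· + (k : ZMod n)) ⁻¹' T)) := by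
  apply Set.Subset.antisymm
  · intro e he
    induction e using Sym2.ind with
    | _ u v =>
      rw [mk_mem_crossEdges_iff, GPetersen, fromRel_adj] at he
      obtain ⟨⟨-, huv | hvu⟩, hx⟩ := he
      · rcases huv with ⟨a, rfl, rfl⟩ | ⟨a, rfl, rfl⟩ | ⟨a, rfl, rfl⟩ <;>
          simp only [inl_mem_image_union, inr_mem_image_union] at hx
        exacts [Or.inl (Or.inl ⟨a, hx, rfl⟩), Or.inl (Or.inr ⟨a, hx, rfl⟩), Or.inr ⟨a, hx, rfl⟩]
      · rcases hvu with ⟨a, rfl, rfl⟩ | ⟨a, rfl, rfl⟩ | ⟨a, rfl, rfl⟩ <;>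
          simp only [inl_mem_image_union, inr_mem_image_union] at hx <;> rw [xor_comm] at hx
        exacts [Or.inl (Or.inl ⟨a, hx, Sym2.eq_swap⟩), Or.inl (Or.inr ⟨a, hx, Sym2.eq_swap⟩),
          Or.inr ⟨a, hx, Sym2.eq_swap⟩]
  · refine Set.union_subset (Set.union_subset ?_ ?_) ?_ <;> rintro _ ⟨a, ha, rfl⟩ <;>
      refine mk_mem_crossEdges_iff.2 ⟨?_, ?_⟩
    · exact adj_inl_inl_add_one h1 a
    · rwa [inl_mem_image_union, inl_mem_image_union]
    · exact adj_inl_inr a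
    · rwa [inl_mem_image_union, inr_mem_image_union]
    · exact adj_inr_inr_add hk a
    · rwa [inr_mem_image_union, inr_mem_image_union]

theorem ncard_crossEdges_image_union [NeZero n] (h1 : (1 + 1 : ZMod n) ≠ 0)
    (hk : (k + k : ZMod n) ≠ 0) :
    (crossEdges (GPetersen n k) (inl '' S ∪ inr '' T)).ncard =
      (S ∆ ((· + 1) ⁻¹' S)).ncard + (S ∆ T).ncard +
        (T ∆ ((· + (k : ZMod n)) ⁻¹' T)).ncard := by
  have h1' : (1 : ZMod n) ≠ 0 := fun h => h1 (by rw [h, add_zero])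
  have hk' : (k : ZMod n) ≠ 0 := fun h => hk (by rw [h, add_zero])
  have hspoke : Injective fun a : ZMod n => s(inl a, inr a) := fun a b h => by
    simpa [Sym2.eq_iff] using h
  rw [crossEdges_image_union h1' hk', Set.ncard_union_eq, Set.ncard_union_eq,
    Set.ncard_image_of_injective _ (injective_sym2_mk_add inl_injective h1),
    Set.ncard_image_of_injective _ hspoke,
    Set.ncard_image_of_injective _ (injective_sym2_mk_add inr_injective hk)]
  · rw [Set.disjoint_left]
    rintro _ ⟨a, -, rfl⟩ ⟨b, -, h⟩
    simp at h
  · rw [Set.disjoint_left]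
    rintro _ (⟨a, -, rfl⟩ | ⟨a, -, rfl⟩) ⟨b, -, h⟩ <;> simp at h

lemma connected_induce_image_union_arc (hL1 : 1 ≤ L) (hL : L < n) (hM : M ≤ L) :
    ((GPetersen n k).induce (inl '' arc n L ∪ inr '' arc n M)).Connected := by
  have : Fact (1 < n) := ⟨by omega⟩
  refine induce_connected_of_exists_adj_lt (r := inl 1)
    (by rw [inl_mem_image_union, mem_arc_iff hL, ZMod.val_one]; omega)
    (Sum.elim (fun a => 2 * a.val) (fun a => 2 * a.val + 1)) ?_
  rintro (a | a) ha hne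
  · rw [inl_mem_image_union, mem_arc_iff hL] at ha
    have ha1 : a.val ≠ 1 := fun h =>
      hne (by rw [ZMod.val_injective n (h.trans (ZMod.val_one n).symm)])
    have hpred := ZMod.val_add_cases (a - 1) 1
    rw [sub_add_cancel, ZMod.val_one] at hpred
    have := (a - 1).val_lt
    refine ⟨inl (a - 1), ?_, ?_, ?_⟩
    · rw [inl_mem_image_union, mem_arc_iff hL]
      omega
    · have hadj := adj_inl_inl_add_one (k := k) one_ne_zero (a - 1)
      rw [sub_add_cancel] at hadj
      exact hadj.symm
    · simp only [Sum.elim_inl]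
      omega
  · rw [inr_mem_image_union, mem_arc_iff (by omega)] at ha
    refine ⟨inl a, ?_, (adj_inl_inr a).symm, by simp⟩
    rw [inl_mem_image_union, mem_arc_iff hL]
    omega

lemma connected_induce_compl_image_union_arc (hk : 0 < k) (hkn : k < n) (hM : M ≤ L)
    (hLk : L + k ≤ n) :
    ((GPetersen n k).induce (inl '' arc n L ∪ inr '' arc n M)ᶜ).Connected := by
  have : Fact (1 < n) := ⟨by omega⟩
  have hL : L < n := by omega
  -- `(-a).val` is the distance from `a` up to `0`, which the steps `a ↦ a + 1` and `a ↦ a + k`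
  -- of the descent decrease.
  refine induce_connected_of_exists_adj_lt (r := inl 0)
    (by rw [Set.mem_compl_iff, inl_mem_image_union, mem_arc_iff hL, ZMod.val_zero]; omega)
    (Sum.elim (fun a => 2 * (-a).val) (fun a => 2 * (-a).val + 1)) ?_
  have hneg := ZMod.val_add_val_neg (n := n)
  have hlt := ZMod.val_lt (n := n)
  rintro (a | a) ha hne
  · rw [Set.mem_compl_iff, inl_mem_image_union, mem_arc_iff hL] at ha
    have ha0 : a.val ≠ 0 := fun h => hne (by rw [(ZMod.val_eq_zero a).1 h])
    have hsucc := ZMod.val_add_cases a 1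
    rw [ZMod.val_one] at hsucc
    have hvals : _ ∧ _ ∧ _ ∧ _ ∧ _ ∧ _ :=
      ⟨hneg a, hneg (a + 1), hlt a, hlt (a + 1), hlt (-a), hlt (-(a + 1))⟩
    refine ⟨inl (a + 1), ?_, adj_inl_inl_add_one one_ne_zero a, ?_⟩
    · rw [Set.mem_compl_iff, inl_mem_image_union, mem_arc_iff hL]
      omega
    · simp only [Sum.elim_inl]
      omega
  · rw [Set.mem_compl_iff, inr_mem_image_union, mem_arc_iff (by omega)] at ha
    by_cases hxa : 1 ≤ a.val ∧ a.val ≤ L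
    · have hjump := ZMod.val_add_cases a k
      rw [ZMod.val_natCast_of_lt hkn] at hjump
      have hvals : _ ∧ _ ∧ _ ∧ _ ∧ _ ∧ _ :=
        ⟨hneg a, hneg (a + k), hlt a, hlt (a + k), hlt (-a), hlt (-(a + k))⟩
      refine ⟨inr (a + k), ?_,
        adj_inr_inr_add (ZMod.natCast_ne_zero_of_pos_of_lt hk hkn) a, ?_⟩
      · rw [Set.mem_compl_iff, inr_mem_image_union, mem_arc_iff (by omega)]
        omega
      · simp only [Sum.elim_inr]
        omega
    · refine ⟨inl a, ?_, (adj_inl_inr a).symm, by simp⟩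
      rwa [Set.mem_compl_iff, inl_mem_image_union, mem_arc_iff hL]

end GPetersen

open GPetersen

theorem gPetersen_bond_large_general (n k i : ℕ) (hk1 : 1 ≤ k)
    (hk2 : 2 * k < n) (hi2 : i ≤ k) :
    IsBond (GPetersen n k)
        (crossEdges (GPetersen n k)
          ((Sum.inl '' {v : ZMod n | ∃ j : ℕ, 1 ≤ j ∧ j ≤ n - k ∧ v = (j : ZMod n)}) ∪
           (Sum.inr '' {v : ZMod n | ∃ j : ℕ, 1 ≤ j ∧ j ≤ i ∧ v = (j : ZMod n)}))) ∧
      (crossEdges (GPetersen n k)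
          ((Sum.inl '' {v : ZMod n | ∃ j : ℕ, 1 ≤ j ∧ j ≤ n - k ∧ v = (j : ZMod n)}) ∪
           (Sum.inr '' {v : ZMod n | ∃ j : ℕ, 1 ≤ j ∧ j ≤ i ∧ v = (j : ZMod n)}))).ncard
        = n - k + i + 2 := by
  change IsBond _ (crossEdges _ (inl '' arc n (n - k) ∪ inr '' arc n i)) ∧
    (crossEdges _ (inl '' arc n (n - k) ∪ inr '' arc n i)).ncard = _
  have : NeZero n := ⟨by omega⟩
  have h2 : (1 + 1 : ZMod n) ≠ 0 := by
    exact_mod_cast ZMod.natCast_ne_zero_of_pos_of_lt (n := n) two_pos (by omega)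
  have h2k : (k + k : ZMod n) ≠ 0 := by
    exact_mod_cast ZMod.natCast_ne_zero_of_pos_of_lt (n := n) (m := k + k) (by omega) (by omega)
  have hcard : (crossEdges (GPetersen n k) (inl '' arc n (n - k) ∪ inr '' arc n i)).ncard =
      n - k + i + 2 := by
    rw [ncard_crossEdges_image_union h2 h2k,
      ncard_symmDiff_arc_preimage_add_one (by omega) (by omega),
      ncard_symmDiff_arc_of_le (by omega) (by omega),
      ncard_symmDiff_arc_preimage_add hi2 (by omega)]
    omega
  refine ⟨isBond_crossEdges ?_ ?_ (Set.nonempty_of_ncard_ne_zero (by omega)), hcard⟩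
  · exact connected_induce_image_union_arc (by omega) (by omega) (by omega)
  · exact connected_induce_compl_image_union_arc (by omega) (by omega) (by omega) (by omega)

/-- for `1 ≤ i ≤ k`, with `A = {x₁, …, x_{n-k}, y₁, …, y_i}`, the cross edges
`[A, B]` form a bond of `P(n,k)` of size `n - k + i + 2`. -/
theorem gPetersen_bond_large (n k i : ℕ) (hn : 3 ≤ n) (hk1 : 1 ≤ k)
    (hk2 : 2 * k < n) (hi1 : 1 ≤ i) (hi2 : i ≤ k) :
    IsBond (GPetersen n k)
        (crossEdges (GPetersen n k)
          ((Sum.inl '' {v : ZMod n | ∃ j : ℕ, 1 ≤ j ∧ j ≤ n - k ∧ v = (j : ZMod n)}) ∪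
           (Sum.inr '' {v : ZMod n | ∃ j : ℕ, 1 ≤ j ∧ j ≤ i ∧ v = (j : ZMod n)}))) ∧
      (crossEdges (GPetersen n k)
          ((Sum.inl '' {v : ZMod n | ∃ j : ℕ, 1 ≤ j ∧ j ≤ n - k ∧ v = (j : ZMod n)}) ∪
           (Sum.inr '' {v : ZMod n | ∃ j : ℕ, 1 ≤ j ∧ j ≤ i ∧ v = (j : ZMod n)}))).ncard
        = n - k + i + 2 :=
  gPetersen_bond_large_general n k i hk1 hk2 hi2
end
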